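/- arXiv:2010.09307 — 4 statements merged into one kernel-verified Lean document; each statement's English description precedes it below -/
import Mathlib

section
/- For all s ∈ ℝ and t > 0, (L̂_d Ê)(s,t) = Ê(s,t)/(2t). -/
/-- The complementary error function `erfc z = (2/√π) ∫_z^∞ e^{-u²} du`. -/
noncomputable def erfc (z : ℝ) : ℝ :=
  (2 / Real.sqrt Real.pi) * ∫ u in Set.Ioi z, Real.exp (-u ^ 2)

/-- `ψ̂₀(s,t) = erfc((d(t)-s)/(2√(εt)))`. -/
noncomputable def psi0 (ε : ℝ) (d : ℝ → ℝ) (s t : ℝ) : ℝ :=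
  erfc ((d t - s) / (2 * Real.sqrt (ε * t)))

/-- `Ê(s,t) = exp(-(s-d(t))²/(4εt))`. -/
noncomputable def Ehat (ε : ℝ) (d : ℝ → ℝ) (s t : ℝ) : ℝ :=
  Real.exp (-(s - d t) ^ 2 / (4 * ε * t))

/-- The operator `L̂_d F = -ε F_ss + â(d(t),t) F_s + F_t`. -/
noncomputable def Ld (ε : ℝ) (a : ℝ → ℝ → ℝ) (d : ℝ → ℝ) (F : ℝ → ℝ → ℝ) (s t : ℝ) : ℝ :=
  -ε * iteratedDeriv 2 (fun x => F x t) s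
    + a (d t) t * deriv (fun x => F x t) s
    + deriv (fun τ => F s τ) t

/-!
Ê is the heat kernel of `-ε ∂ₛ² + ∂ₜ` moved along the characteristic `s = d(t)`. The transport
term `â(d(t),t) ∂ₛÊ` cancels exactly the contribution of `d'(t) = â(d(t),t)` to `∂ₜÊ`, and the
remaining heat-operator terms leave `Ê/(2t)`, since the one-dimensional heat kernel
`(4πεt)^{-1/2} Ê` lacks the factor `t^{-1/2}`.
-/

theorem hasDerivAt_Ehat_space (ε : ℝ) (d : ℝ → ℝ) (s t : ℝ) :
    HasDerivAt (fun x => Ehat ε d x t) (-(s - d t) / (2 * ε * t) * Ehat ε d s t) s := by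
  have hexponent : HasDerivAt (fun x => -(x - d t) ^ 2 / (4 * ε * t))
      (-(2 * (s - d t)) / (4 * ε * t)) s := by
    refine ((((hasDerivAt_id' s).sub_const (d t)).pow 2).neg.div_const (4 * ε * t)).congr_deriv ?_
    ring
  refine hexponent.exp.congr_deriv ?_
  unfold Ehat
  ring

theorem deriv_Ehat_space (ε : ℝ) (d : ℝ → ℝ) (t : ℝ) :
    deriv (fun x => Ehat ε d x t) = fun x => -(x - d t) / (2 * ε * t) * Ehat ε d x t :=
  funext fun x => (hasDerivAt_Ehat_space ε d x t).deriv

theorem iteratedDeriv_two_Ehat_space (ε : ℝ) (d : ℝ → ℝ) (s t : ℝ) :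
    iteratedDeriv 2 (fun x => Ehat ε d x t) s
      = ((s - d t) ^ 2 / (2 * ε * t) ^ 2 - 1 / (2 * ε * t)) * Ehat ε d s t := by
  rw [iteratedDeriv_succ, iteratedDeriv_one, deriv_Ehat_space]
  have hfactor : HasDerivAt (fun x => -(x - d t) / (2 * ε * t)) (-1 / (2 * ε * t)) s :=
    ((hasDerivAt_id' s).sub_const (d t)).neg.div_const (2 * ε * t)
  refine (hfactor.mul (hasDerivAt_Ehat_space ε d s t)).deriv.trans ?_
  ring

theorem hasDerivAt_Ehat_time {ε : ℝ} (hε : ε ≠ 0) {d : ℝ → ℝ} {v t : ℝ}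
    (hd : HasDerivAt d v t) (ht : t ≠ 0) (s : ℝ) :
    HasDerivAt (fun τ => Ehat ε d s τ)
      (((s - d t) * v / (2 * ε * t) + (s - d t) ^ 2 / (4 * ε * t ^ 2)) * Ehat ε d s t) t := by
  have hnum : HasDerivAt (fun τ => -(s - d τ) ^ 2) (2 * (s - d t) * v) t := by
    refine ((hd.const_sub s).pow 2).neg.congr_deriv ?_
    ring
  have hden : HasDerivAt (fun τ => 4 * ε * τ) (4 * ε) t := by
    simpa using (hasDerivAt_id t).const_mul (4 * ε)
  have hexponent : HasDerivAt (fun τ => -(s - d τ) ^ 2 / (4 * ε * τ))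
      ((2 * (s - d t) * v * (4 * ε * t) - -(s - d t) ^ 2 * (4 * ε)) / (4 * ε * t) ^ 2) t :=
    hnum.div hden (by positivity)
  refine hexponent.exp.congr_deriv ?_
  unfold Ehat
  field_simp
  ring

theorem stmt_1_general
    (ε : ℝ) (hε : 0 < ε)
    (a : ℝ → ℝ → ℝ)
    (d : ℝ → ℝ)
    (hdODE : ∀ t : ℝ, 0 ≤ t → HasDerivAt d (a (d t) t) t) :
    ∀ s t : ℝ, 0 < t →
      Ld ε a d (Ehat ε d) s t = Ehat ε d s t / (2 * t) := by
  intro s t ht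
  rw [Ld, iteratedDeriv_two_Ehat_space, deriv_Ehat_space,
    (hasDerivAt_Ehat_time hε.ne' (hdODE t ht.le) ht.ne' s).deriv]
  field_simp
  ring

/-- For all `s : ℝ` and `t > 0`, `(Ld Ehat)(s,t) = Ehat s t / (2t)`. -/
theorem stmt_1
    (ε d₀ : ℝ) (hε : 0 < ε) (hd₀ : d₀ ∈ Set.Ioo (0 : ℝ) 1)
    (a : ℝ → ℝ → ℝ) (haC1 : ContDiff ℝ 1 (fun p : ℝ × ℝ => a p.1 p.2))
    (hapos : ∀ s t : ℝ, 0 ≤ t → 0 < a s t)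
    (d : ℝ → ℝ) (hdC1 : ContDiff ℝ 1 d)
    (hdODE : ∀ t : ℝ, 0 ≤ t → HasDerivAt d (a (d t) t) t)
    (hd0 : d 0 = d₀) :
    ∀ s t : ℝ, 0 < t →
      Ld ε a d (Ehat ε d) s t = Ehat ε d s t / (2 * t) :=
  stmt_1_general ε hε a d hdODE
end

section
/- For all s ∈ ℝ and t > 0, L̂_d applied to the function (s,t) ↦ (d(t)−s)·ψ̂₀(s,t) equals 2ε ∂ψ̂₀/∂s(s,t) = 2√(ε/(πt)) Ê(s,t). -/
open Real Set MeasureTheory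

/-!
`Ld` obeys the Leibniz rule `Ld (F * G) = F * Ld G + G * Ld F - 2ε F_s G_s`, and it annihilates
both factors of `(d(t) - s) * ψ̂₀`. For `d(t) - s` this is the ODE `d' = â(d, t)`. For
`ψ̂₀(s, t) = u(d(t) - s, t)` with `u(y, t) = erfc(y / (2√(εt)))`, the drift term `â ψ̂₀_s` cancels
the `d'` part of `ψ̂₀_t`, and what remains is `u_t - ε u_yy = 0`, the heat equation for the
error-function profile. Hence `Ld ((d - s) * ψ̂₀) = -2ε * (-1) * ∂ψ̂₀/∂s`.
-/

theorem hasDerivAt_integral_Ioi {f : ℝ → ℝ} (hf : Integrable f) (hc : Continuous f) (z : ℝ) :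
    HasDerivAt (fun x => ∫ u in Ioi x, f u) (-f z) z := by
  have hsplit : (fun x => ∫ u in Ioi x, f u)
      = fun x => (∫ u in Ioi 0, f u) - ∫ u in (0 : ℝ)..x, f u := by
    funext x
    rw [← intervalIntegral.integral_Ioi_sub_Ioi' hf.integrableOn hf.integrableOn]
    ring
  rw [hsplit]
  exact (intervalIntegral.integral_hasDerivAt_right hf.intervalIntegrable
    hf.aestronglyMeasurable.stronglyMeasurableAtFilter hc.continuousAt).const_sub _

theorem hasDerivAt_erfc (z : ℝ) : HasDerivAt erfc (-(2 / √π * exp (-z ^ 2))) z := by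
  have hint : Integrable fun u : ℝ => exp (-u ^ 2) := by
    simpa using integrable_exp_neg_mul_sq one_pos
  exact ((hasDerivAt_integral_Ioi hint (by fun_prop) z).const_mul (2 / √π)).congr_deriv (by ring)

theorem iteratedDeriv_two_mul {f g : ℝ → ℝ} {x : ℝ} (hf : Differentiable ℝ f)
    (hg : Differentiable ℝ g) (hf' : DifferentiableAt ℝ (deriv f) x)
    (hg' : DifferentiableAt ℝ (deriv g) x) :
    iteratedDeriv 2 (fun y => f y * g y) x
      = iteratedDeriv 2 f x * g x + 2 * deriv f x * deriv g x + f x * iteratedDeriv 2 g x := by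
  have hderiv : deriv (fun y => f y * g y) = fun y => deriv f y * g y + f y * deriv g y :=
    funext fun y => deriv_fun_mul (hf y) (hg y)
  simp only [iteratedDeriv_succ, iteratedDeriv_zero, hderiv]
  rw [((hf'.hasDerivAt.fun_mul (hg x).hasDerivAt).fun_add
    ((hf x).hasDerivAt.fun_mul hg'.hasDerivAt)).deriv]
  ring

section Ld

variable {ε : ℝ} {a : ℝ → ℝ → ℝ} {d : ℝ → ℝ} {s t : ℝ}

theorem Ld_mul {F G : ℝ → ℝ → ℝ}
    (hFs : Differentiable ℝ fun x => F x t) (hGs : Differentiable ℝ fun x => G x t)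
    (hFss : DifferentiableAt ℝ (deriv fun x => F x t) s)
    (hGss : DifferentiableAt ℝ (deriv fun x => G x t) s)
    (hFt : DifferentiableAt ℝ (fun τ => F s τ) t) (hGt : DifferentiableAt ℝ (fun τ => G s τ) t) :
    Ld ε a d (fun x τ => F x τ * G x τ) s t
      = F s t * Ld ε a d G s t + G s t * Ld ε a d F s t
        - 2 * ε * deriv (fun x => F x t) s * deriv (fun x => G x t) s := by
  simp only [Ld]
  rw [iteratedDeriv_two_mul hFs hGs hFss hGss, deriv_fun_mul (hFs s) (hGs s),
    deriv_fun_mul hFt hGt]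
  ring

theorem Ld_const_sub (hd : HasDerivAt d (a (d t) t) t) :
    Ld ε a d (fun x τ => d τ - x) s t = 0 := by
  simp only [Ld, iteratedDeriv_succ, iteratedDeriv_zero, deriv_const_sub_id', deriv_const,
    (hd.sub_const s).deriv]
  ring

theorem hasDerivAt_psi0_space (x : ℝ) :
    HasDerivAt (fun y => psi0 ε d y t)
      (2 / √π * exp (-((d t - x) / (2 * √(ε * t))) ^ 2) / (2 * √(ε * t))) x := by
  have hξ : HasDerivAt (fun y => (d t - y) / (2 * √(ε * t))) (-1 / (2 * √(ε * t))) x := by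
    simpa using ((hasDerivAt_id x).const_sub (d t)).div_const (2 * √(ε * t))
  exact ((hasDerivAt_erfc _).comp x hξ).congr_deriv (by ring)

theorem hasDerivAt_deriv_psi0_space (x : ℝ) :
    HasDerivAt (deriv fun y => psi0 ε d y t)
      (2 / √π * exp (-((d t - x) / (2 * √(ε * t))) ^ 2) / (2 * √(ε * t))
        * (2 * (d t - x) / (2 * √(ε * t)) ^ 2)) x := by
  rw [funext fun y => (hasDerivAt_psi0_space (ε := ε) (d := d) (t := t) y).deriv]
  have hξ : HasDerivAt (fun y => -((d t - y) / (2 * √(ε * t))) ^ 2)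
      (2 * (d t - x) / (2 * √(ε * t)) ^ 2) x := by
    have := ((((hasDerivAt_id x).const_sub (d t)).div_const (2 * √(ε * t))).pow 2).neg
    exact this.congr_deriv (by simp only [Nat.cast_ofNat, id_eq, Nat.add_one_sub_one, pow_one]; ring)
  exact ((hξ.exp.const_mul (2 / √π)).div_const (2 * √(ε * t))).congr_deriv (by ring)

theorem hasDerivAt_psi0_time (hε : 0 < ε) (ht : 0 < t) (hd : HasDerivAt d (a (d t) t) t) :
    HasDerivAt (fun τ => psi0 ε d s τ)
      (-(2 / √π * exp (-((d t - s) / (2 * √(ε * t))) ^ 2))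
        * ((a (d t) t * (2 * √(ε * t)) - (d t - s) * (ε / √(ε * t))) / (2 * √(ε * t)) ^ 2)) t := by
  have hεt : 0 < ε * t := mul_pos hε ht
  have hr : HasDerivAt (fun τ => 2 * √(ε * τ)) (ε / √(ε * t)) t := by
    have := (((hasDerivAt_id t).const_mul ε).sqrt (by simpa using hεt.ne')).const_mul 2
    exact this.congr_deriv (by simp only [id]; field_simp)
  exact (hasDerivAt_erfc _).comp t ((hd.sub_const s).div hr (by positivity))

theorem Ld_psi0 (hε : 0 < ε) (ht : 0 < t) (hd : HasDerivAt d (a (d t) t) t) :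
    Ld ε a d (psi0 ε d) s t = 0 := by
  have hεt : 0 < ε * t := mul_pos hε ht
  simp only [Ld]
  rw [iteratedDeriv_succ, iteratedDeriv_one, (hasDerivAt_deriv_psi0_space s).deriv,
    (hasDerivAt_psi0_space s).deriv, (hasDerivAt_psi0_time hε ht hd).deriv]
  field_simp
  rw [sq_sqrt hεt.le]
  ring

theorem two_mul_deriv_psi0 (hε : 0 < ε) (ht : 0 < t) :
    2 * ε * deriv (fun x => psi0 ε d x t) s = 2 * √(ε / (π * t)) * Ehat ε d s t := by
  have hεt : 0 < ε * t := mul_pos hε ht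
  have hexp : -((d t - s) / (2 * √(ε * t))) ^ 2 = -(s - d t) ^ 2 / (4 * ε * t) := by
    rw [div_pow, mul_pow, sq_sqrt hεt.le]
    ring
  have hsqrt : √(ε / (π * t)) = ε / (√π * √(ε * t)) := by
    rw [sqrt_div hε.le, sqrt_mul pi_pos.le, sqrt_mul hε.le]
    have := sqrt_pos.2 hε
    field_simp
    rw [sq_sqrt hε.le]
  rw [(hasDerivAt_psi0_space s).deriv, Ehat, hexp, hsqrt]
  ring

end Ld

theorem stmt_2_general
    (ε : ℝ) (hε : 0 < ε)
    (a : ℝ → ℝ → ℝ)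
    (d : ℝ → ℝ)
    (hdODE : ∀ t : ℝ, 0 ≤ t → HasDerivAt d (a (d t) t) t) :
    ∀ s t : ℝ, 0 < t →
      Ld ε a d (fun s' t' => (d t' - s') * psi0 ε d s' t') s t
        = 2 * ε * deriv (fun x => psi0 ε d x t) s ∧
      2 * ε * deriv (fun x => psi0 ε d x t) s
        = 2 * Real.sqrt (ε / (Real.pi * t)) * Ehat ε d s t := by
  intro s t ht
  have hd := hdODE t ht.le
  refine ⟨?_, two_mul_deriv_psi0 hε ht⟩
  rw [Ld_mul (F := fun x τ => d τ - x) (by fun_prop)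
      (fun x => (hasDerivAt_psi0_space x).differentiableAt) (by simp)
      (hasDerivAt_deriv_psi0_space s).differentiableAt (hd.sub_const s).differentiableAt
      (hasDerivAt_psi0_time hε ht hd).differentiableAt,
    Ld_const_sub hd, Ld_psi0 hε ht hd, deriv_const_sub_id]
  ring

/-- `Ld` applied to `(s,t) ↦ (d t - s) * psi0 s t` equals
`2ε ∂psi0/∂s`, which equals `2 sqrt(ε/(πt)) Ehat`. -/
theorem stmt_2
    (ε d₀ : ℝ) (hε : 0 < ε) (hd₀ : d₀ ∈ Set.Ioo (0 : ℝ) 1)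
    (a : ℝ → ℝ → ℝ) (haC1 : ContDiff ℝ 1 (fun p : ℝ × ℝ => a p.1 p.2))
    (hapos : ∀ s t : ℝ, 0 ≤ t → 0 < a s t)
    (d : ℝ → ℝ) (hdC1 : ContDiff ℝ 1 d)
    (hdODE : ∀ t : ℝ, 0 ≤ t → HasDerivAt d (a (d t) t) t)
    (hd0 : d 0 = d₀) :
    ∀ s t : ℝ, 0 < t →
      Ld ε a d (fun s' t' => (d t' - s') * psi0 ε d s' t') s t
        = 2 * ε * deriv (fun x => psi0 ε d x t) s ∧
      2 * ε * deriv (fun x => psi0 ε d x t) s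
        = 2 * Real.sqrt (ε / (Real.pi * t)) * Ehat ε d s t :=
  stmt_2_general ε hε a d hdODE
end

section
/- For all integers n ≥ 1, and for all s ∈ ℝ and t > 0, L̂_d applied to the function (s,t) ↦ √t (d(t)−s)^n Ê(s,t) equals ((n+1)(d(t)−s)^n/√t − ε n(n−1) √t (d(t)−s)^{n−2}) Ê(s,t). -/
/-!
The proof is a direct computation. Both `s`-derivatives of `(D - s)ⁿ exp(-(s - D)²/c)` are again
combinations of the functions `(D - s)ᵐ exp(-(s - D)²/c)`, and the `t`-derivative brings in
`d' = â(d, t)`. In `L̂_d` the drift term `â ∂ₛ` cancels against this chain-rule contribution of `d'`,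
and the `(d - s)ⁿ⁺²` terms of `-ε ∂ₛ²` cancel against the `t`-derivative of `-(s - d)²/(4εt)`.
-/

open Real

theorem hasDerivAt_pow_mul_exp_neg_sq_div (D c : ℝ) (n : ℕ) (x : ℝ) :
    HasDerivAt (fun y => (D - y) ^ n * exp (-(y - D) ^ 2 / c))
      ((2 * (D - x) ^ (n + 1) / c - n * (D - x) ^ (n - 1)) * exp (-(x - D) ^ 2 / c)) x := by
  have hpow := ((hasDerivAt_id' x).const_sub D).pow n
  have hexp := ((((hasDerivAt_id' x).sub_const D).pow 2).neg.div_const c).exp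
  refine (hpow.mul hexp).congr_deriv ?_
  simp only [Pi.pow_apply, Pi.neg_apply, Nat.cast_ofNat]
  ring

theorem deriv_pow_mul_exp_neg_sq_div (D c : ℝ) (n : ℕ) :
    deriv (fun y => (D - y) ^ n * exp (-(y - D) ^ 2 / c))
      = fun x => 2 / c * ((D - x) ^ (n + 1) * exp (-(x - D) ^ 2 / c))
          - n * ((D - x) ^ (n - 1) * exp (-(x - D) ^ 2 / c)) := by
  funext x
  rw [(hasDerivAt_pow_mul_exp_neg_sq_div D c n x).deriv]
  ring

theorem iteratedDeriv_two_pow_mul_exp_neg_sq_div (D c : ℝ) (n : ℕ) (x : ℝ) :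
    iteratedDeriv 2 (fun y => (D - y) ^ n * exp (-(y - D) ^ 2 / c)) x
      = (4 * (D - x) ^ (n + 2) / c ^ 2 - 2 * (2 * n + 1) * (D - x) ^ n / c
          + n * (n - 1) * (D - x) ^ (n - 2)) * exp (-(x - D) ^ 2 / c) := by
  have h : HasDerivAt (fun y => 2 / c * ((D - y) ^ (n + 1) * exp (-(y - D) ^ 2 / c))
      - n * ((D - y) ^ (n - 1) * exp (-(y - D) ^ 2 / c))) _ x :=
    ((hasDerivAt_pow_mul_exp_neg_sq_div D c (n + 1) x).const_mul (2 / c)).sub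
      ((hasDerivAt_pow_mul_exp_neg_sq_div D c (n - 1) x).const_mul (n : ℝ))
  rw [iteratedDeriv_succ, iteratedDeriv_one, deriv_pow_mul_exp_neg_sq_div, h.deriv]
  -- for `n ≤ 1` the truncated exponents `n - 1`, `n - 2` only occur with vanishing coefficients
  rcases n with _ | k
  · push_cast
    ring
  · rw [show k + 1 - 2 = k - 1 by omega]
    simp only [Nat.add_sub_cancel, Nat.cast_add, Nat.cast_one]
    ring

theorem hasDerivAt_Ehat {ε A s t : ℝ} {d : ℝ → ℝ} (hε : ε ≠ 0) (ht : t ≠ 0)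
    (hd : HasDerivAt d A t) :
    HasDerivAt (Ehat ε d s)
      (((d t - s) ^ 2 / (4 * ε * t ^ 2) - 2 * A * (d t - s) / (4 * ε * t)) * Ehat ε d s t) t := by
  have hden : HasDerivAt (fun τ => 4 * ε * τ) (4 * ε * 1) t := (hasDerivAt_id' t).const_mul _
  have h := ((hd.const_sub s).pow 2).neg.div hden (by positivity)
  refine h.exp.congr_deriv ?_
  simp only [Ehat, Pi.pow_apply, Pi.neg_apply, Pi.div_apply]
  field_simp
  ring

theorem stmt_8_general
    (ε : ℝ) (hε : 0 < ε)
    (a : ℝ → ℝ → ℝ)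
    (d : ℝ → ℝ)
    (hdODE : ∀ t : ℝ, 0 ≤ t → HasDerivAt d (a (d t) t) t) :
    ∀ n : ℕ, 1 ≤ n → ∀ s t : ℝ, 0 < t →
      Ld ε a d (fun s' t' => Real.sqrt t' * (d t' - s') ^ n * Ehat ε d s' t') s t
        = (((n : ℝ) + 1) * (d t - s) ^ n / Real.sqrt t
            - ε * (n : ℝ) * ((n : ℝ) - 1) * Real.sqrt t * (d t - s) ^ (n - 2))
          * Ehat ε d s t := by
  intro n hn s t ht
  have hspace : (fun x => √t * (d t - x) ^ n * Ehat ε d x t)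
      = fun x => √t * ((d t - x) ^ n * exp (-(x - d t) ^ 2 / (4 * ε * t))) := by
    simp only [Ehat, mul_assoc]
  have htime : HasDerivAt (fun τ => √τ * (d τ - s) ^ n * Ehat ε d s τ) _ t :=
    ((hasDerivAt_sqrt ht.ne').mul (((hdODE t ht.le).sub_const s).pow n)).mul
      (hasDerivAt_Ehat (s := s) hε.ne' ht.ne' (hdODE t ht.le))
  rw [Ld, hspace, iteratedDeriv_const_mul_field, iteratedDeriv_two_pow_mul_exp_neg_sq_div,
    deriv_const_mul_field, deriv_pow_mul_exp_neg_sq_div, htime.deriv]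
  obtain ⟨k, rfl⟩ := Nat.exists_eq_add_of_le' hn
  obtain ⟨r, hr, rfl⟩ : ∃ r, 0 < r ∧ t = r ^ 2 := ⟨√t, sqrt_pos.2 ht, (sq_sqrt ht.le).symm⟩
  simp only [Ehat, Pi.pow_apply, Pi.mul_apply, Nat.add_sub_cancel, sqrt_sq hr.le]
  field_simp
  ring

/-- for all integers `n ≥ 1`, `Ld` applied to
`(s,t) ↦ sqrt t * (d t - s)^n * Ehat s t` equals
`((n+1)(d t - s)^n / sqrt t - ε n (n-1) sqrt t (d t - s)^(n-2)) Ehat s t`. -/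
theorem stmt_8
    (ε d₀ : ℝ) (hε : 0 < ε) (hd₀ : d₀ ∈ Set.Ioo (0 : ℝ) 1)
    (a : ℝ → ℝ → ℝ) (haC1 : ContDiff ℝ 1 (fun p : ℝ × ℝ => a p.1 p.2))
    (hapos : ∀ s t : ℝ, 0 ≤ t → 0 < a s t)
    (d : ℝ → ℝ) (hdC1 : ContDiff ℝ 1 d)
    (hdODE : ∀ t : ℝ, 0 ≤ t → HasDerivAt d (a (d t) t) t)
    (hd0 : d 0 = d₀) :
    ∀ n : ℕ, 1 ≤ n → ∀ s t : ℝ, 0 < t →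
      Ld ε a d (fun s' t' => Real.sqrt t' * (d t' - s') ^ n * Ehat ε d s' t') s t
        = (((n : ℝ) + 1) * (d t - s) ^ n / Real.sqrt t
            - ε * (n : ℝ) * ((n : ℝ) - 1) * Real.sqrt t * (d t - s) ^ (n - 2))
          * Ehat ε d s t :=
  stmt_8_general ε hε a d hdODE
end

section
/- (Comparison principle.) Let ω : [0,1]×[0,T] → ℝ be continuous, twice continuously differentiable in x and once in t on Q⁻ ∪ Q⁺, with one-sided spatial derivatives ω_x(d⁻,t) and ω_x(d⁺,t) existing for t ∈ (0,T]. Suppose: ω(x,0) ≥ 0 for all x ∈ [0,1]; ω(0,t) ≥ 0 and ω(1,t) ≥ 0 for all t ∈ [0,T]; −ε ω_xx + κ ω_x + g ω_t ≥ 0 at every point of Q⁻ ∪ Q⁺; and −(((1−d)/(1−d(t))) ω_x(d⁺,t) − (d/d(t)) ω_x(d⁻,t)) ≥ 0 for all t ∈ (0,T]. Then ω(x,t) ≥ 0 for all (x,t) ∈ [0,1]×[0,T]. -/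
open Set Filter Topology

lemma slope_left_le {f : ℝ → ℝ} {D m a p : ℝ} (had : a < p)
    (h : HasDerivWithinAt f D (Set.Iio p) p)
    (hm : ∀ x ∈ Set.Ioo a p, m * (p - x) ≤ f x - f p) : D ≤ -m := by
  have htend : Tendsto (slope f p) (𝓝[<] p) (𝓝 D) := by
    have := hasDerivWithinAt_iff_tendsto_slope.1 h
    have hs : Set.Iio p \ {p} = Set.Iio p := by
      ext x; simp (config := {contextual := true}) [lt_iff_le_and_ne]
    rwa [hs] at this
  refine le_of_tendsto htend ?_
  filter_upwards [Ioo_mem_nhdsLT_of_mem (show p ∈ Set.Ioc a p from ⟨had, le_refl p⟩)] with x hx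
  have hxp : x - p < 0 := by linarith [hx.2]
  have := hm x hx
  rw [slope_def_field]
  rw [div_le_iff_of_neg hxp]
  ring_nf
  nlinarith [hm x hx]

lemma slope_right_ge {f : ℝ → ℝ} {D m b p : ℝ} (hpb : p < b)
    (h : HasDerivWithinAt f D (Set.Ioi p) p)
    (hm : ∀ x ∈ Set.Ioo p b, m * (x - p) ≤ f x - f p) : m ≤ D := by
  have htend : Tendsto (slope f p) (𝓝[>] p) (𝓝 D) := by
    have := hasDerivWithinAt_iff_tendsto_slope.1 h
    have hs : Set.Ioi p \ {p} = Set.Ioi p := by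
      ext x
      simp only [Set.mem_diff, Set.mem_Ioi, Set.mem_singleton_iff]
      exact ⟨fun h => h.1, fun h => ⟨h, ne_of_gt h⟩⟩
    rwa [hs] at this
  refine ge_of_tendsto htend ?_
  filter_upwards [Ioo_mem_nhdsGT_of_mem (show p ∈ Set.Ico p b from ⟨le_refl p, hpb⟩)] with x hx
  have hxp : 0 < x - p := by linarith [hx.1]
  rw [slope_def_field, le_div_iff₀ hxp]
  nlinarith [hm x hx]

lemma time_deriv_nonpos {h : ℝ → ℝ} {D a t₀ : ℝ} (ha : a < t₀)
    (hmin : ∀ t ∈ Set.Ioc a t₀, h t₀ ≤ h t)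
    (hD : HasDerivAt h D t₀) : D ≤ 0 := by
  have htend : Tendsto (slope h t₀) (𝓝[<] t₀) (𝓝 D) :=
    (hasDerivAt_iff_tendsto_slope.1 hD).mono_left
      (nhdsWithin_mono _ (fun x hx => ne_of_lt hx))
  refine le_of_tendsto htend ?_
  filter_upwards [Ioo_mem_nhdsLT_of_mem (show t₀ ∈ Set.Ioc a t₀ from ⟨ha, le_refl _⟩)] with t ht
  have h1 : h t₀ ≤ h t := hmin t ⟨ht.1, le_of_lt ht.2⟩
  have h2 : t - t₀ < 0 := by linarith [ht.2]
  rw [slope_def_field]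
  exact div_nonpos_of_nonneg_of_nonpos (by linarith) (by linarith)

lemma second_deriv_nonneg {f f' : ℝ → ℝ} {a b x₀ L : ℝ} (hx₀ : x₀ ∈ Set.Ioo a b)
    (hf : ∀ x ∈ Set.Ioo a b, HasDerivAt f (f' x) x)
    (hmin : ∀ x ∈ Set.Ioo a b, f x₀ ≤ f x)
    (h0 : f' x₀ = 0) (hL : HasDerivAt f' L x₀) : 0 ≤ L := by
  by_contra hneg
  push_neg at hneg
  have htend : Tendsto (slope f' x₀) (𝓝[>] x₀) (𝓝 L) :=
    (hasDerivAt_iff_tendsto_slope.1 hL).mono_left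
      (nhdsWithin_mono _ (fun x hx => ne_of_gt hx))
  have hev : ∀ᶠ x in 𝓝[>] x₀, slope f' x₀ x < 0 :=
    htend.eventually_lt_const hneg
  have hev2 : Set.Ioo x₀ b ∈ 𝓝[>] x₀ :=
    Ioo_mem_nhdsGT_of_mem ⟨le_refl x₀, hx₀.2⟩
  obtain ⟨u, hu, hsub⟩ := mem_nhdsGT_iff_exists_Ioo_subset.1
    (Filter.inter_mem hev hev2)
  have hu' : x₀ < min u b := lt_min hu hx₀.2
  set x₁ := (x₀ + min u b) / 2 with hx₁def
  have hx₁l : x₀ < x₁ := by simp only [hx₁def]; linarith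
  have hx₁u : x₁ < u := by have := min_le_left u b; simp only [hx₁def]; linarith
  have hx₁b : x₁ < b := by have := min_le_right u b; simp only [hx₁def]; linarith
  have hIccsub : Set.Icc x₀ x₁ ⊆ Set.Ioo a b := fun x hx =>
    ⟨lt_of_lt_of_le hx₀.1 hx.1, lt_of_le_of_lt hx.2 hx₁b⟩
  obtain ⟨ξ, hξ, hξeq⟩ := exists_hasDerivAt_eq_slope f f' hx₁l
    (fun x hx => ((hf x (hIccsub hx)).continuousAt).continuousWithinAt)
    (fun x hx => hf x (hIccsub ⟨le_of_lt hx.1, le_of_lt hx.2⟩))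
  have hξs : ξ ∈ {x | slope f' x₀ x < 0} ∩ Set.Ioo x₀ b :=
    hsub ⟨hξ.1, lt_of_lt_of_le (lt_trans hξ.2 hx₁u) (le_refl u)⟩
  have hslope : slope f' x₀ ξ = f' ξ / (ξ - x₀) := by
    rw [slope_def_field, h0]; ring_nf
  have hξpos : 0 < ξ - x₀ := by linarith [hξ.1]
  have hf'neg : f' ξ < 0 := by
    have := hξs.1
    rw [Set.mem_setOf_eq, hslope, div_neg_iff] at this
    rcases this with ⟨_, h2⟩ | ⟨h1, _⟩
    · linarith
    · exact h1
  have hmin' : 0 ≤ f x₁ - f x₀ := by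
    have := hmin x₁ ⟨lt_trans hx₀.1 hx₁l, hx₁b⟩
    linarith
  rw [hξeq] at hf'neg
  have : 0 ≤ (f x₁ - f x₀) / (x₁ - x₀) := div_nonneg hmin' (by linarith)
  linarith



/-- The coefficient `g(x,t)`: `(d(t)/d)²` for `x < d` and `((1-d(t))/(1-d))²` for `x > d`. -/
noncomputable def gfun (d : ℝ) (dd : ℝ → ℝ) (x t : ℝ) : ℝ :=
  if x < d then (dd t / d) ^ 2 else ((1 - dd t) / (1 - d)) ^ 2

/-- The change of variables: `s(x,t) = (d(t)/d)x` for `x ≤ d` and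
`s(x,t) = 1 - ((1-d(t))/(1-d))(1-x)` for `x ≥ d`. -/
noncomputable def smap (d : ℝ) (dd : ℝ → ℝ) (x t : ℝ) : ℝ :=
  if x ≤ d then (dd t / d) * x else 1 - ((1 - dd t) / (1 - d)) * (1 - x)

/-- `ψ_d(x) = (d-x)/d` for `x < d` and `(x-d)/(1-d)` for `x > d`. -/
noncomputable def psid (d x : ℝ) : ℝ :=
  if x < d then (d - x) / d else (x - d) / (1 - d)

/-- `κ(x,t) = sqrt(g(x,t)) (a(x,t) + a(d,t)(ψ_d(x) - 1))`, where
`a(x,t) = â(s(x,t),t)` and `a(d,t) = â(d(t),t)`. -/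
noncomputable def kappa (ahat : ℝ → ℝ → ℝ) (d : ℝ) (dd : ℝ → ℝ) (x t : ℝ) : ℝ :=
  Real.sqrt (gfun d dd x t) *
    (ahat (smap d dd x t) t + ahat (dd t) t * (psid d x - 1))

/-- The transformed operator `(𝓛F)(x,t) = -ε F_xx + κ F_x + g F_t`. -/
noncomputable def LL (ε : ℝ) (ahat : ℝ → ℝ → ℝ) (d : ℝ) (dd : ℝ → ℝ)
    (F : ℝ → ℝ → ℝ) (x t : ℝ) : ℝ :=
  -ε * iteratedDeriv 2 (fun x' => F x' t) x
    + kappa ahat d dd x t * deriv (fun x' => F x' t) x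
    + gfun d dd x t * deriv (fun t' => F x t') t

set_option maxHeartbeats 2000000

/-- comparison principle: if `ω` is continuous on `[0,1]×[0,T]`, twice
continuously differentiable in `x` and once in `t` on `Q⁻ ∪ Q⁺`, has one-sided spatial
derivatives at `x = d`, is nonnegative on the initial and lateral boundaries, satisfies
`-ε ω_xx + κ ω_x + g ω_t ≥ 0` on `Q⁻ ∪ Q⁺` and
`-(((1-d)/(1-d(t))) ω_x(d⁺,t) - (d/d(t)) ω_x(d⁻,t)) ≥ 0`, then `ω ≥ 0` on `[0,1]×[0,T]`. -/
theorem stmt_14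
    (ε T d α : ℝ) (hε : 0 < ε) (hT : 0 < T) (hd : d ∈ Set.Ioo (0 : ℝ) 1) (hα : 0 < α)
    (ahat : ℝ → ℝ → ℝ)
    (haC1 : ContDiffOn ℝ 1 (fun p : ℝ × ℝ => ahat p.1 p.2)
      (Set.Icc 0 1 ×ˢ Set.Icc 0 T))
    (haα : ∀ s ∈ Set.Icc (0 : ℝ) 1, ∀ t ∈ Set.Icc (0 : ℝ) T, α ≤ ahat s t)
    (dd : ℝ → ℝ)
    (hddODE : ∀ t ∈ Set.Icc (0 : ℝ) T, HasDerivAt dd (ahat (dd t) t) t)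
    (hdd0 : dd 0 = d)
    (hddQ : ∀ t ∈ Set.Icc (0 : ℝ) T, dd t ∈ Set.Ioo (0 : ℝ) 1)
    (hddT : dd T < 1)
    (ω ωx ωxx ωt : ℝ → ℝ → ℝ)
    (hcont : ContinuousOn (fun p : ℝ × ℝ => ω p.1 p.2)
      (Set.Icc 0 1 ×ˢ Set.Icc 0 T))
    (hωx : ∀ x t : ℝ,
      (x, t) ∈ (Set.Ioo 0 d ×ˢ Set.Ioc 0 T) ∪ (Set.Ioo d 1 ×ˢ Set.Ioc 0 T) →
      HasDerivAt (fun x' => ω x' t) (ωx x t) x)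
    (hωxx : ∀ x t : ℝ,
      (x, t) ∈ (Set.Ioo 0 d ×ˢ Set.Ioc 0 T) ∪ (Set.Ioo d 1 ×ˢ Set.Ioc 0 T) →
      HasDerivAt (fun x' => ωx x' t) (ωxx x t) x)
    (hωt : ∀ x t : ℝ,
      (x, t) ∈ (Set.Ioo 0 d ×ˢ Set.Ioc 0 T) ∪ (Set.Ioo d 1 ×ˢ Set.Ioc 0 T) →
      HasDerivAt (fun t' => ω x t') (ωt x t) t)
    (hωxc : ContinuousOn (fun p : ℝ × ℝ => ωx p.1 p.2)
      ((Set.Ioo 0 d ×ˢ Set.Ioc 0 T) ∪ (Set.Ioo d 1 ×ˢ Set.Ioc 0 T)))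
    (hωxxc : ContinuousOn (fun p : ℝ × ℝ => ωxx p.1 p.2)
      ((Set.Ioo 0 d ×ˢ Set.Ioc 0 T) ∪ (Set.Ioo d 1 ×ˢ Set.Ioc 0 T)))
    (hωtc : ContinuousOn (fun p : ℝ × ℝ => ωt p.1 p.2)
      ((Set.Ioo 0 d ×ˢ Set.Ioc 0 T) ∪ (Set.Ioo d 1 ×ˢ Set.Ioc 0 T)))
    (ωxm ωxp : ℝ → ℝ)
    (hωxm : ∀ t ∈ Set.Ioc (0 : ℝ) T,
      HasDerivWithinAt (fun x' => ω x' t) (ωxm t) (Set.Iio d) d)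
    (hωxp : ∀ t ∈ Set.Ioc (0 : ℝ) T,
      HasDerivWithinAt (fun x' => ω x' t) (ωxp t) (Set.Ioi d) d)
    (hinit : ∀ x ∈ Set.Icc (0 : ℝ) 1, 0 ≤ ω x 0)
    (hbdry : ∀ t ∈ Set.Icc (0 : ℝ) T, 0 ≤ ω 0 t ∧ 0 ≤ ω 1 t)
    (hpde : ∀ x t : ℝ,
      (x, t) ∈ (Set.Ioo 0 d ×ˢ Set.Ioc 0 T) ∪ (Set.Ioo d 1 ×ˢ Set.Ioc 0 T) →
      0 ≤ -ε * ωxx x t + kappa ahat d dd x t * ωx x t + gfun d dd x t * ωt x t)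
    (hjump : ∀ t ∈ Set.Ioc (0 : ℝ) T,
      0 ≤ -(((1 - d) / (1 - dd t)) * ωxp t - (d / dd t) * ωxm t)) :
    ∀ x ∈ Set.Icc (0 : ℝ) 1, ∀ t ∈ Set.Icc (0 : ℝ) T, 0 ≤ ω x t := by
  by_contra hcon
  push_neg at hcon
  obtain ⟨x0, hx0, t0, ht0, hneg⟩ := hcon
  obtain ⟨hd0, hd1⟩ := hd
  have hd1' : (0:ℝ) < 1 - d := by linarith
  -- continuity of dd
  have hddcont : ContinuousOn dd (Set.Icc 0 T) := fun t ht =>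
    (hddODE t ht).continuousAt.continuousWithinAt
  have hIccNE : (Set.Icc (0:ℝ) T).Nonempty := ⟨0, by constructor <;> linarith⟩
  obtain ⟨t1, ht1, hmin1⟩ := isCompact_Icc.exists_isMinOn hIccNE hddcont
  obtain ⟨t2, ht2, hmax2⟩ := isCompact_Icc.exists_isMaxOn hIccNE hddcont
  have hδ1 : 0 < dd t1 := (hddQ t1 ht1).1
  have hδ2 : dd t2 < 1 := (hddQ t2 ht2).2
  set gmin := min ((dd t1 / d) ^ 2) (((1 - dd t2) / (1 - d)) ^ 2) with hgmindef
  have hgmin_pos : 0 < gmin := by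
    apply lt_min
    · positivity
    · have : 0 < 1 - dd t2 := by linarith
      positivity
  have hg_lb : ∀ x t : ℝ, t ∈ Set.Icc 0 T → gmin ≤ gfun d dd x t := by
    intro x t ht
    have h1 : dd t1 ≤ dd t := hmin1 ht
    have h2 : dd t ≤ dd t2 := hmax2 ht
    unfold gfun
    split
    · refine le_trans (min_le_left _ _) (pow_le_pow_left₀ (by positivity) ?_ 2)
      exact div_le_div_of_nonneg_right h1 hd0.le
    · refine le_trans (min_le_right _ _)
        (pow_le_pow_left₀ (div_nonneg (by linarith) (by linarith)) ?_ 2)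
      exact div_le_div_of_nonneg_right (by linarith) hd1'.le
  -- bound on ahat
  obtain ⟨A, hA⟩ := (isCompact_Icc.prod isCompact_Icc).exists_bound_of_continuousOn
    haC1.continuousOn
  have hA0 : 0 ≤ A := le_trans (norm_nonneg _)
    (hA ((0:ℝ), (0:ℝ)) ⟨⟨le_refl 0, by norm_num⟩, ⟨le_refl 0, hT.le⟩⟩)
  set C0 := max (1/d) (1/(1-d)) with hC0def
  have hC0pos : 0 < C0 := lt_max_of_lt_left (by positivity)
  have hC0d : 1/d ≤ C0 := le_max_left _ _
  have hC0d' : 1/(1-d) ≤ C0 := le_max_right _ _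
  set E := C0 * (2*A) with hEdef
  have hE0 : 0 ≤ E := by positivity
  -- bound on kappa
  have hκbound : ∀ x ∈ Set.Icc (0:ℝ) 1, ∀ t ∈ Set.Icc (0:ℝ) T,
      |kappa ahat d dd x t| ≤ E := by
    intro x hx t ht
    have hdt := hddQ t ht
    have hsmem : smap d dd x t ∈ Set.Icc (0:ℝ) 1 := by
      unfold smap
      split_ifs with hxd
      · constructor
        · exact mul_nonneg (div_nonneg hdt.1.le hd0.le) hx.1
        · calc dd t / d * x ≤ dd t / d * d :=
                mul_le_mul_of_nonneg_left hxd (div_nonneg hdt.1.le hd0.le)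
            _ = dd t := by field_simp
            _ ≤ 1 := hdt.2.le
      · have h1x : 0 ≤ 1 - x := by linarith [hx.2]
        have hnn : 0 ≤ (1 - dd t)/(1-d) * (1-x) :=
          mul_nonneg (div_nonneg (by linarith [hdt.2]) hd1'.le) h1x
        constructor
        · have : (1 - dd t)/(1-d) * (1-x) ≤ (1 - dd t)/(1-d) * (1-d) := by
            apply mul_le_mul_of_nonneg_left _ (div_nonneg (by linarith [hdt.2]) hd1'.le)
            push_neg at hxd; linarith
          have heq : (1 - dd t)/(1-d) * (1-d) = 1 - dd t := by field_simp
          nlinarith [hdt.1]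
        · linarith
    have hψ : |psid d x - 1| ≤ 1 := by
      unfold psid
      rw [abs_le]
      split_ifs with hxd
      · constructor
        · have : (d - x)/d ≥ 0 := div_nonneg (by linarith) hd0.le
          linarith
        · have : (d - x)/d ≤ 1 := by
            rw [div_le_one hd0]; linarith [hx.1]
          linarith
      · constructor
        · have : (x - d)/(1-d) ≥ 0 := div_nonneg (by push_neg at hxd; linarith) hd1'.le
          linarith
        · have : (x - d)/(1-d) ≤ 1 := by
            rw [div_le_one hd1']; linarith [hx.2]
          linarith
    have hsg : Real.sqrt (gfun d dd x t) ≤ C0 := by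
      have hgle : gfun d dd x t ≤ C0 ^ 2 := by
        unfold gfun
        split
        · calc (dd t / d)^2 ≤ (1/d)^2 := by
                apply pow_le_pow_left₀ (div_nonneg hdt.1.le hd0.le)
                apply div_le_div_of_nonneg_right hdt.2.le hd0.le

            _ ≤ C0^2 := pow_le_pow_left₀ (by positivity) hC0d 2
        · calc ((1 - dd t)/(1-d))^2 ≤ (1/(1-d))^2 := by
                apply pow_le_pow_left₀ (div_nonneg (by linarith [hdt.2]) hd1'.le)
                apply div_le_div_of_nonneg_right (by linarith [hdt.1]) hd1'.le
            _ ≤ C0^2 := pow_le_pow_left₀ (by positivity) hC0d' 2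
      calc Real.sqrt (gfun d dd x t) ≤ Real.sqrt (C0^2) := Real.sqrt_le_sqrt hgle
        _ = C0 := Real.sqrt_sq hC0pos.le
    have ha1 : |ahat (smap d dd x t) t| ≤ A := hA (smap d dd x t, t) ⟨hsmem, ht⟩
    have ha2 : |ahat (dd t) t| ≤ A := hA (dd t, t) ⟨⟨hdt.1.le, hdt.2.le⟩, ht⟩
    unfold kappa
    rw [abs_mul]
    have hsnn : 0 ≤ Real.sqrt (gfun d dd x t) := Real.sqrt_nonneg _
    have habs : |Real.sqrt (gfun d dd x t)| = Real.sqrt (gfun d dd x t) := abs_of_nonneg hsnn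
    rw [habs, hEdef]
    have hin : |ahat (smap d dd x t) t + ahat (dd t) t * (psid d x - 1)| ≤ 2*A := by
      calc |ahat (smap d dd x t) t + ahat (dd t) t * (psid d x - 1)|
          ≤ |ahat (smap d dd x t) t| + |ahat (dd t) t * (psid d x - 1)| := abs_add_le _ _
        _ ≤ A + A * 1 := by
            refine add_le_add ha1 ?_
            rw [abs_mul]
            exact mul_le_mul ha2 hψ (abs_nonneg _) hA0
        _ = 2*A := by ring
    exact mul_le_mul hsg hin (abs_nonneg _) hC0pos.le
  -- penalty parameters
  set δ0 := -ω x0 t0 with hδ0def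
  have hδ0pos : 0 < δ0 := by simp only [hδ0def]; linarith
  set η := δ0 / (2*(T+1)) with hηdef
  have hηpos : 0 < η := by positivity
  set c := min (δ0/4) (gmin*η/(E*C0+1)) with hcdef
  have hcpos : 0 < c := lt_min (by positivity) (by positivity)
  have hckey : E * c * C0 < gmin * η := by
    have h1 : c ≤ gmin*η/(E*C0+1) := min_le_right _ _
    have h2 : c * (E*C0+1) ≤ gmin*η := by
      rw [le_div_iff₀ (by positivity)] at h1; exact h1
    nlinarith [hE0, hC0pos, hcpos]
  -- the penalty function χ
  set χ : ℝ → ℝ := fun x => min (x/d) ((1-x)/(1-d)) with hχdef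
  have hχcont : Continuous χ := by
    apply Continuous.min <;> fun_prop
  have hχleft : ∀ x : ℝ, x ≤ d → χ x = x/d := by
    intro x hx
    apply min_eq_left
    rw [div_le_div_iff₀ hd0 hd1']
    ring_nf
    linarith
  have hχright : ∀ x : ℝ, d ≤ x → χ x = (1-x)/(1-d) := by
    intro x hx
    apply min_eq_right
    rw [div_le_div_iff₀ hd1' hd0]
    ring_nf
    linarith
  have hχd : χ d = 1 := by rw [hχleft d (le_refl d)]; field_simp
  have hχ01 : ∀ x ∈ Set.Icc (0:ℝ) 1, 0 ≤ χ x ∧ χ x ≤ 1 := by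
    intro x hx
    constructor
    · exact le_min (div_nonneg hx.1 hd0.le) (div_nonneg (by linarith [hx.2]) hd1'.le)
    · rcases le_or_gt x d with h | h
      · rw [hχleft x h, div_le_one hd0]; exact h
      · rw [hχright x h.le, div_le_one hd1']; linarith
  have hχderivL : ∀ x : ℝ, x < d → HasDerivAt χ (1/d) x := by
    intro x hx
    have h1 : HasDerivAt (fun y : ℝ => y/d) (1/d) x := by
      simpa using (hasDerivAt_id x).div_const d
    apply h1.congr_of_eventuallyEq
    filter_upwards [Iio_mem_nhds hx] with y hy
    exact hχleft y (le_of_lt hy)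
  have hχderivR : ∀ x : ℝ, d < x → HasDerivAt χ (-(1/(1-d))) x := by
    intro x hx
    have h1 : HasDerivAt (fun y : ℝ => (1-y)/(1-d)) (-(1/(1-d))) x := by
      have : HasDerivAt (fun y : ℝ => 1-y) (-1) x := by
        simpa using (hasDerivAt_id x).const_sub 1
      simpa [neg_div] using this.div_const (1-d)
    apply h1.congr_of_eventuallyEq
    filter_upwards [Ioi_mem_nhds hx] with y hy
    exact hχright y (le_of_lt hy)
  -- the perturbed function v and its minimum
  set v : ℝ × ℝ → ℝ := fun p => ω p.1 p.2 + η * p.2 + c * χ p.1 with hvdef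
  have hvcont : ContinuousOn v (Set.Icc 0 1 ×ˢ Set.Icc 0 T) := by
    apply ContinuousOn.add
    apply ContinuousOn.add hcont
    · fun_prop
    · exact (continuous_const.mul (hχcont.comp continuous_fst)).continuousOn
  have hKco : IsCompact (Set.Icc (0:ℝ) 1 ×ˢ Set.Icc (0:ℝ) T) :=
    isCompact_Icc.prod isCompact_Icc
  have hKne : (Set.Icc (0:ℝ) 1 ×ˢ Set.Icc (0:ℝ) T).Nonempty :=
    ⟨(0,0), ⟨⟨le_refl 0, by norm_num⟩, ⟨le_refl 0, hT.le⟩⟩⟩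
  obtain ⟨⟨xs, ts⟩, hmemK, hminv⟩ := hKco.exists_isMinOn hKne hvcont
  have hxs01 : xs ∈ Set.Icc (0:ℝ) 1 := hmemK.1
  have hts0T : ts ∈ Set.Icc (0:ℝ) T := hmemK.2
  -- the minimum value is negative
  have hvneg : v (xs, ts) < 0 := by
    have h1 : v (xs, ts) ≤ v (x0, t0) := hminv ⟨hx0, ht0⟩
    have h2 : v (x0, t0) < 0 := by
      have hη : η * t0 ≤ η * T := mul_le_mul_of_nonneg_left ht0.2 hηpos.le
      have hc1 : c * χ x0 ≤ c := by
        have := (hχ01 x0 hx0).2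
        nlinarith
      have hηT : η * T < δ0/2 := by
        rw [hηdef]
        rw [div_mul_eq_mul_div, div_lt_div_iff₀ (by positivity) (by norm_num)]
        nlinarith
      have hc2 : c ≤ δ0/4 := min_le_left _ _
      have : v (x0, t0) = ω x0 t0 + η * t0 + c * χ x0 := rfl
      rw [this]
      have : ω x0 t0 = -δ0 := by rw [hδ0def]; ring
      linarith
    linarith
  -- exclusion of boundaries
  have hχ0 : χ 0 = 0 := by rw [hχleft 0 hd0.le]; simp
  have hχ1 : χ 1 = 0 := by rw [hχright 1 hd1.le]; simp
  have hxs_ne0 : xs ≠ 0 := by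
    intro h
    have : v (xs, ts) = ω 0 ts + η * ts + c * χ 0 := by rw [h]
    rw [this, hχ0] at hvneg
    have := (hbdry ts hts0T).1
    have : 0 ≤ η * ts := mul_nonneg hηpos.le hts0T.1
    nlinarith [(hbdry ts hts0T).1]
  have hxs_ne1 : xs ≠ 1 := by
    intro h
    have heq : v (xs, ts) = ω 1 ts + η * ts + c * χ 1 := by rw [h]
    rw [heq, hχ1] at hvneg
    have : 0 ≤ η * ts := mul_nonneg hηpos.le hts0T.1
    nlinarith [(hbdry ts hts0T).2]
  have hts_ne0 : ts ≠ 0 := by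
    intro h
    have heq : v (xs, ts) = ω xs 0 + η * 0 + c * χ xs := by rw [h]
    rw [heq] at hvneg
    have h1 := hinit xs hxs01
    have h2 := (hχ01 xs hxs01).1
    nlinarith
  have hxsIoo : xs ∈ Set.Ioo (0:ℝ) 1 :=
    ⟨lt_of_le_of_ne hxs01.1 (Ne.symm hxs_ne0), lt_of_le_of_ne hxs01.2 hxs_ne1⟩
  have htsIoc : ts ∈ Set.Ioc (0:ℝ) T :=
    ⟨lt_of_le_of_ne hts0T.1 (Ne.symm hts_ne0), hts0T.2⟩
  -- slice minimality
  have hAx : ∀ x ∈ Set.Icc (0:ℝ) 1, v (xs, ts) ≤ v (x, ts) :=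
    fun x hx => hminv ⟨hx, hts0T⟩
  have hAt : ∀ t ∈ Set.Icc (0:ℝ) T, v (xs, ts) ≤ v (xs, t) :=
    fun t ht => hminv ⟨hxs01, ht⟩
  -- some common facts
  have htsIcc : ts ∈ Set.Icc (0:ℝ) T := ⟨htsIoc.1.le, htsIoc.2⟩
  have hdts := hddQ ts htsIcc
  rcases lt_trichotomy xs d with hlt | heq | hgt
  · -- case xs ∈ (0, d)
    have hxsI : xs ∈ Set.Ioo 0 d := ⟨hxsIoo.1, hlt⟩
    have memQ : (xs, ts) ∈ (Set.Ioo 0 d ×ˢ Set.Ioc 0 T) ∪ (Set.Ioo d 1 ×ˢ Set.Ioc 0 T) :=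
      Or.inl ⟨hxsI, htsIoc⟩
    have hIooIcc : ∀ x ∈ Set.Ioo (0:ℝ) d, x ∈ Set.Icc (0:ℝ) 1 :=
      fun x hx => ⟨hx.1.le, by linarith [hx.2]⟩
    have hfderiv : ∀ x ∈ Set.Ioo (0:ℝ) d,
        HasDerivAt (fun x' => v (x', ts)) (ωx x ts + c*(1/d)) x := by
      intro x hx
      have h1 := hωx x ts (Or.inl ⟨hx, htsIoc⟩)
      have h2 := (hχderivL x hx.2).const_mul c
      exact (h1.add_const (η*ts)).add h2
    have hloc : IsLocalMin (fun x => v (x, ts)) xs := by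
      have hmo : IsMinOn (fun x => v (x, ts)) (Set.Icc 0 1) xs := isMinOn_iff.2 hAx
      exact hmo.isLocalMin (Icc_mem_nhds hxsIoo.1 hxsIoo.2)
    have h0 : ωx xs ts + c*(1/d) = 0 :=
      hloc.hasDerivAt_eq_zero (hfderiv xs hxsI)
    have hωxval : ωx xs ts = -(c/d) := by
      have : c*(1/d) = c/d := by ring
      linarith
    have hL : HasDerivAt (fun x => ωx x ts + c*(1/d)) (ωxx xs ts) xs :=
      (hωxx xs ts memQ).add_const _
    have hxx : 0 ≤ ωxx xs ts := by
      refine second_deriv_nonneg hxsI hfderiv ?_ h0 hL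
      exact fun x hx => hAx x (hIooIcc x hx)
    have hD : HasDerivAt (fun t => v (xs, t)) (ωt xs ts + η) ts := by
      have h1 := hωt xs ts memQ
      have h2 : HasDerivAt (fun t : ℝ => η * t) η ts := by
        simpa using (hasDerivAt_id ts).const_mul η
      exact (h1.add h2).add_const (c * χ xs)
    have htle : ωt xs ts + η ≤ 0 := by
      refine time_deriv_nonpos htsIoc.1 ?_ hD
      exact fun t ht => hAt t ⟨ht.1.le, le_trans ht.2 htsIoc.2⟩
    have hωtval : ωt xs ts ≤ -η := by linarith
    -- put the PDE inequality to contradiction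
    have hP := hpde xs ts memQ
    have hκ := hκbound xs (hIooIcc xs hxsI) ts htsIcc
    have hg := hg_lb xs ts htsIcc
    have h1 : -ε * ωxx xs ts ≤ 0 := by
      have := mul_nonneg hε.le hxx; linarith
    have h2 : kappa ahat d dd xs ts * ωx xs ts ≤ E * c * C0 := by
      have habs : kappa ahat d dd xs ts * ωx xs ts ≤ |kappa ahat d dd xs ts| * |ωx xs ts| := by
        rw [← abs_mul]; exact le_abs_self _
      have hωxabs : |ωx xs ts| = c/d := by
        rw [hωxval, abs_neg, abs_of_pos (by positivity)]
      have hcd : c/d ≤ c * C0 := by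
        have : c/d = c * (1/d) := by ring
        rw [this]
        exact mul_le_mul_of_nonneg_left hC0d hcpos.le
      calc kappa ahat d dd xs ts * ωx xs ts
          ≤ |kappa ahat d dd xs ts| * |ωx xs ts| := habs
        _ ≤ E * (c * C0) := by
            rw [hωxabs]
            exact mul_le_mul hκ hcd (by positivity) hE0
        _ = E * c * C0 := by ring
    have h3 : gfun d dd xs ts * ωt xs ts ≤ -(gmin * η) := by
      have hg0 : 0 ≤ gfun d dd xs ts - gmin := by linarith
      have ht0 : ωt xs ts ≤ 0 := by linarith
      have hh := mul_nonpos_of_nonneg_of_nonpos hg0 ht0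
      have hh2 : gmin * ωt xs ts ≤ gmin * (-η) :=
        mul_le_mul_of_nonneg_left hωtval hgmin_pos.le
      nlinarith
    linarith [hckey]
  · -- case xs = d : interface
    have hχxs : χ xs = 1 := by rw [heq, hχd]
    have hmleft : ωxm ts ≤ -(c/d) := by
      refine slope_left_le (f := fun x => ω x ts) hd0 (hωxm ts htsIoc) ?_
      intro x hx
      have hv := hAx x ⟨hx.1.le, by linarith [hx.2]⟩
      have hvx : v (x, ts) = ω x ts + η * ts + c * (x/d) := by
        simp only [hvdef]; rw [hχleft x hx.2.le]
      have hvd : v (xs, ts) = ω d ts + η * ts + c * 1 := by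
        simp only [hvdef]; rw [heq, hχd]
      rw [hvx, hvd] at hv
      have hkey : c/d * (d - x) = c * 1 - c * (x/d) := by field_simp
      linarith
    have hmright : c/(1-d) ≤ ωxp ts := by
      refine slope_right_ge (f := fun x => ω x ts) hd1 (hωxp ts htsIoc) ?_
      intro x hx
      have hv := hAx x ⟨by linarith [hx.1], hx.2.le⟩
      have hvx : v (x, ts) = ω x ts + η * ts + c * ((1-x)/(1-d)) := by
        simp only [hvdef]; rw [hχright x hx.1.le]
      have hvd : v (xs, ts) = ω d ts + η * ts + c * 1 := by
        simp only [hvdef]; rw [heq, hχd]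
      rw [hvx, hvd] at hv
      have hkey : c/(1-d) * (x - d) = c * 1 - c * ((1-x)/(1-d)) := by field_simp; ring
      linarith
    have hj := hjump ts htsIoc
    have hA'pos : 0 < (1-d)/(1 - dd ts) := div_pos hd1' (by linarith [hdts.2])
    have hB'pos : 0 < d / dd ts := div_pos hd0 hdts.1
    have hh1 : (1-d)/(1 - dd ts) * (c/(1-d)) ≤ (1-d)/(1 - dd ts) * ωxp ts :=
      mul_le_mul_of_nonneg_left hmright hA'pos.le
    have hh2 : d / dd ts * ωxm ts ≤ d / dd ts * (-(c/d)) :=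
      mul_le_mul_of_nonneg_left hmleft hB'pos.le
    have hp1 : 0 < (1-d)/(1 - dd ts) * (c/(1-d)) := by positivity
    have hp2 : d / dd ts * (-(c/d)) < 0 := by
      have : 0 < d / dd ts * (c/d) := by positivity
      linarith
    linarith
  · -- case xs ∈ (d, 1)
    have hxsI : xs ∈ Set.Ioo d 1 := ⟨hgt, hxsIoo.2⟩
    have memQ : (xs, ts) ∈ (Set.Ioo 0 d ×ˢ Set.Ioc 0 T) ∪ (Set.Ioo d 1 ×ˢ Set.Ioc 0 T) :=
      Or.inr ⟨hxsI, htsIoc⟩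
    have hIooIcc : ∀ x ∈ Set.Ioo d (1:ℝ), x ∈ Set.Icc (0:ℝ) 1 :=
      fun x hx => ⟨by linarith [hx.1], hx.2.le⟩
    have hfderiv : ∀ x ∈ Set.Ioo d (1:ℝ),
        HasDerivAt (fun x' => v (x', ts)) (ωx x ts + c*(-(1/(1-d)))) x := by
      intro x hx
      have h1 := hωx x ts (Or.inr ⟨hx, htsIoc⟩)
      have h2 := (hχderivR x hx.1).const_mul c
      exact (h1.add_const (η*ts)).add h2
    have hloc : IsLocalMin (fun x => v (x, ts)) xs := by
      have hmo : IsMinOn (fun x => v (x, ts)) (Set.Icc 0 1) xs := isMinOn_iff.2 hAx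
      exact hmo.isLocalMin (Icc_mem_nhds hxsIoo.1 hxsIoo.2)
    have h0 : ωx xs ts + c*(-(1/(1-d))) = 0 :=
      hloc.hasDerivAt_eq_zero (hfderiv xs hxsI)
    have hωxval : ωx xs ts = c/(1-d) := by
      have : c*(-(1/(1-d))) = -(c/(1-d)) := by ring
      linarith
    have hL : HasDerivAt (fun x => ωx x ts + c*(-(1/(1-d)))) (ωxx xs ts) xs :=
      (hωxx xs ts memQ).add_const _
    have hxx : 0 ≤ ωxx xs ts := by
      refine second_deriv_nonneg hxsI hfderiv ?_ h0 hL
      exact fun x hx => hAx x (hIooIcc x hx)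
    have hD : HasDerivAt (fun t => v (xs, t)) (ωt xs ts + η) ts := by
      have h1 := hωt xs ts memQ
      have h2 : HasDerivAt (fun t : ℝ => η * t) η ts := by
        simpa using (hasDerivAt_id ts).const_mul η
      exact (h1.add h2).add_const (c * χ xs)
    have htle : ωt xs ts + η ≤ 0 := by
      refine time_deriv_nonpos htsIoc.1 ?_ hD
      exact fun t ht => hAt t ⟨ht.1.le, le_trans ht.2 htsIoc.2⟩
    have hωtval : ωt xs ts ≤ -η := by linarith
    have hP := hpde xs ts memQ
    have hκ := hκbound xs (hIooIcc xs hxsI) ts htsIcc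
    have hg := hg_lb xs ts htsIcc
    have h1 : -ε * ωxx xs ts ≤ 0 := by
      have := mul_nonneg hε.le hxx; linarith
    have h2 : kappa ahat d dd xs ts * ωx xs ts ≤ E * c * C0 := by
      have habs : kappa ahat d dd xs ts * ωx xs ts ≤ |kappa ahat d dd xs ts| * |ωx xs ts| := by
        rw [← abs_mul]; exact le_abs_self _
      have hωxabs : |ωx xs ts| = c/(1-d) := by
        rw [hωxval, abs_of_pos (by positivity)]
      have hcd : c/(1-d) ≤ c * C0 := by
        have : c/(1-d) = c * (1/(1-d)) := by ring
        rw [this]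
        exact mul_le_mul_of_nonneg_left hC0d' hcpos.le
      calc kappa ahat d dd xs ts * ωx xs ts
          ≤ |kappa ahat d dd xs ts| * |ωx xs ts| := habs
        _ ≤ E * (c * C0) := by
            rw [hωxabs]
            exact mul_le_mul hκ hcd (by positivity) hE0
        _ = E * c * C0 := by ring
    have h3 : gfun d dd xs ts * ωt xs ts ≤ -(gmin * η) := by
      have hg0 : 0 ≤ gfun d dd xs ts - gmin := by linarith
      have ht0 : ωt xs ts ≤ 0 := by linarith
      have hh := mul_nonpos_of_nonneg_of_nonpos hg0 ht0
      have hh2 : gmin * ωt xs ts ≤ gmin * (-η) :=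
        mul_le_mul_of_nonneg_left hωtval hgmin_pos.le
      nlinarith
    linarith [hckey]
end
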